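/- Under internal validity of the RCT, internal validity of the observational study, external validity (transportability of potential-outcome means), and overlap, the vector signal difference satisfies the conditional moment restrictions: for each a ∈ {0,1} and every x with P(X=x) > 0, E[ψ₁ᵃ − ψ₀ᵃ | X=x] = 0. -/

import Mathlib

open MeasureTheory

/-- Conditional expectation of `Z` given the event `E`: `E[Z | E] = (∫_E Z dP) / P(E)`. -/
noncomputable def eCond {Ω : Type*} [MeasurableSpace Ω] (P : Measure Ω) (E : Set Ω)
    (Z : Ω → ℝ) : ℝ :=
  (∫ ω in E, Z ω ∂P) / (P E).toReal

/-- Conditional probability of `E'` given the event `E`: `P(E' | E) = P(E' ∩ E) / P(E)`. -/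
noncomputable def pCond {Ω : Type*} [MeasurableSpace Ω] (P : Measure Ω) (E' E : Set Ω) : ℝ :=
  (P (E' ∩ E)).toReal / (P E).toReal

/-- The RCT potential-outcome signal
`ψ₀ᵃ = (1{S=0} / P(S=0 | X)) · Y · 1{A=a} / P(A=a | S=0)`. -/
noncomputable def psi0a {Ω 𝒳 : Type*} [MeasurableSpace Ω] (P : Measure Ω)
    (X : Ω → 𝒳) (S A : Ω → Fin 2) (Y : Ω → ℝ) (a : Fin 2) (ω : Ω) : ℝ :=
  ((if S ω = 0 then (1 : ℝ) else 0) / pCond P {ω' | S ω' = 0} {ω' | X ω' = X ω}) * Y ω *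
    (if A ω = a then (1 : ℝ) else 0) / pCond P {ω' | A ω' = a} {ω' | S ω' = 0}

/-- The response surface `μ_a(x) = E[Y | X=x, A=a, S=1]`. -/
noncomputable def mu {Ω 𝒳 : Type*} [MeasurableSpace Ω] (P : Measure Ω)
    (X : Ω → 𝒳) (S A : Ω → Fin 2) (Y : Ω → ℝ) (a : Fin 2) (x : 𝒳) : ℝ :=
  eCond P {ω | X ω = x ∧ A ω = a ∧ S ω = 1} Y

/-- The observational potential-outcome signal
`ψ₁ᵃ = (1 / P(S=0 | X)) · [ 1{S=0}·μ_a(X) +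
1{S=1}·(P(S=0 | X)/P(S=1 | X))·1{A=a}(Y − μ_a(X))/P(A=a | X, S=1) ]`. -/
noncomputable def psi1a {Ω 𝒳 : Type*} [MeasurableSpace Ω] (P : Measure Ω)
    (X : Ω → 𝒳) (S A : Ω → Fin 2) (Y : Ω → ℝ) (a : Fin 2) (ω : Ω) : ℝ :=
  (1 / pCond P {ω' | S ω' = 0} {ω' | X ω' = X ω}) *
    ((if S ω = 0 then (1 : ℝ) else 0) * mu P X S A Y a (X ω) +
      (if S ω = 1 then (1 : ℝ) else 0) *
        (pCond P {ω' | S ω' = 0} {ω' | X ω' = X ω} /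
          pCond P {ω' | S ω' = 1} {ω' | X ω' = X ω}) *
        ((if A ω = a then (1 : ℝ) else 0) * (Y ω - mu P X S A Y a (X ω)) /
          pCond P {ω' | A ω' = a} {ω' | X ω' = X ω ∧ S ω' = 1}))

/-!
On the fibre `{X = x}` both signals integrate to `P(X = x)` times a cell mean of `Y`. For `ψ₁ᵃ`
this mean is `μ_a(x)`, since the augmentation term lives on `{X = x, S = 1, A = a}`, where
`Y - μ_a(x)` has mean zero. For `ψ₀ᵃ` it is `E[Y | X = x, S = 0, A = a]`, because a fixed
assignment probability gives `P(A = a | S = 0) = P(A = a | X = x, S = 0)`. Consistency and mean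
ignorability in each study reduce the two cell means to `E[Y_a | X = x, S = s]`, and
transportability equates these.
-/

open Set

section ConditionalMeans

variable {Ω : Type*} [MeasurableSpace Ω] {P : Measure Ω}

lemma eCond_congr_ae {E : Set Ω} (hE : MeasurableSet E) {f g : Ω → ℝ}
    (h : ∀ᵐ ω ∂P, ω ∈ E → f ω = g ω) : eCond P E f = eCond P E g := by
  rw [eCond, eCond, setIntegral_congr_ae hE h]

lemma measure_inter_pos_of_pCond_pos {E' E : Set Ω} (h : 0 < pCond P E' E) :
    0 < P (E' ∩ E) :=
  pos_iff_ne_zero.mpr fun h0 => by simp [pCond, h0] at h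

variable [IsFiniteMeasure P]

lemma setIntegral_eq_eCond_mul (E : Set Ω) (Z : Ω → ℝ) :
    ∫ ω in E, Z ω ∂P = eCond P E Z * (P E).toReal := by
  rcases eq_or_ne (P E) 0 with h | h
  · simp [eCond, Measure.restrict_eq_zero.mpr h, h]
  · rw [eCond, div_mul_cancel₀]
    exact ENNReal.toReal_ne_zero.mpr ⟨h, measure_ne_top _ _⟩

lemma setIntegral_sub_eCond {E : Set Ω} {Z : Ω → ℝ} (hZ : IntegrableOn Z E P) :
    ∫ ω in E, (Z ω - eCond P E Z) ∂P = 0 := by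
  rw [integral_sub hZ (integrable_const _), setIntegral_eq_eCond_mul, setIntegral_const,
    smul_eq_mul, measureReal_def, mul_comm, sub_self]

lemma pCond_mul_toReal (E' E : Set Ω) :
    pCond P E' E * (P E).toReal = (P (E' ∩ E)).toReal := by
  rcases eq_or_ne (P E) 0 with h | h
  · simp [pCond, h, measure_mono_null inter_subset_right h]
  · exact div_mul_cancel₀ _ (ENNReal.toReal_ne_zero.mpr ⟨h, measure_ne_top _ _⟩)

lemma pCond_ne_zero {E' E : Set Ω} (h : P (E' ∩ E) ≠ 0) : pCond P E' E ≠ 0 :=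
  div_ne_zero (ENNReal.toReal_ne_zero.mpr ⟨h, measure_ne_top _ _⟩)
    (ENNReal.toReal_ne_zero.mpr ⟨fun h' => h (measure_mono_null inter_subset_right h'),
      measure_ne_top _ _⟩)

lemma pCond_compl {s : Set Ω} (hs : MeasurableSet s) {E : Set Ω} (hE : P E ≠ 0) :
    pCond P sᶜ E = 1 - pCond P s E := by
  have hE' : (P E).toReal ≠ 0 := ENNReal.toReal_ne_zero.mpr ⟨hE, measure_ne_top _ _⟩
  rw [eq_sub_iff_add_eq, pCond, pCond, ← add_div, div_eq_one_iff_eq hE', ← measureReal_def,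
    ← measureReal_def, ← measureReal_def, inter_comm, inter_comm s, ← sdiff_eq,
    add_comm, measureReal_inter_add_sdiff hs]

lemma pCond_eq_of_forall_fiber {𝒳 : Type*} [MeasurableSpace 𝒳] [Countable 𝒳]
    [MeasurableSingletonClass 𝒳] {X : Ω → 𝒳} (hX : Measurable X) {B T : Set Ω}
    (hB : MeasurableSet B) (hT : MeasurableSet T) (hT0 : P T ≠ 0) {p : ℝ} (hp : 0 ≤ p)
    (h : ∀ x, 0 < P (X ⁻¹' {x} ∩ T) → pCond P B (X ⁻¹' {x} ∩ T) = p) :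
    pCond P B T = p := by
  have hfiber : ∀ x, P (X ⁻¹' {x} ∩ (B ∩ T)) = ENNReal.ofReal p * P (X ⁻¹' {x} ∩ T) := by
    intro x
    rw [inter_left_comm]
    rcases eq_or_ne (P (X ⁻¹' {x} ∩ T)) 0 with h0 | h0
    · rw [h0, mul_zero]
      exact measure_mono_null inter_subset_right h0
    · rw [← ENNReal.ofReal_toReal (measure_ne_top P _), ← pCond_mul_toReal,
        h x (pos_iff_ne_zero.mpr h0), ENNReal.ofReal_mul hp,
        ENNReal.ofReal_toReal (measure_ne_top P _)]
  have hmap : (P.restrict (B ∩ T)).map X = ENNReal.ofReal p • (P.restrict T).map X := by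
    refine Measure.ext_of_singleton fun x => ?_
    rw [Measure.smul_apply, Measure.map_apply hX (measurableSet_singleton x),
      Measure.map_apply hX (measurableSet_singleton x), Measure.restrict_apply' (hB.inter hT),
      Measure.restrict_apply' hT, smul_eq_mul, hfiber]
  have htotal : P (B ∩ T) = ENNReal.ofReal p * P T := by
    simpa [Measure.map_apply hX MeasurableSet.univ] using congrArg (· univ) hmap
  rw [pCond, htotal, ENNReal.toReal_mul, ENNReal.toReal_ofReal hp,
    mul_div_cancel_right₀ _ (ENNReal.toReal_ne_zero.mpr ⟨hT0, measure_ne_top _ _⟩)]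

lemma pCond_fin_two_zero {A : Ω → Fin 2} (hA : Measurable A) {E : Set Ω} (hE : P E ≠ 0) :
    pCond P {ω | A ω = 0} E = 1 - pCond P {ω | A ω = 1} E := by
  have hcompl : {ω | A ω = 0} = {ω | A ω = 1}ᶜ := by
    ext ω
    simp only [mem_compl_iff, mem_ofPred_eq, Fin.ext_iff]
    omega
  rw [hcompl]
  exact pCond_compl (hA (measurableSet_singleton 1)) hE

lemma pCond_fin_two_congr {A : Ω → Fin 2} (hA : Measurable A) {E F : Set Ω} (hE : P E ≠ 0)
    (hF : P F ≠ 0) (h : pCond P {ω | A ω = 1} E = pCond P {ω | A ω = 1} F) (a : Fin 2) :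
    pCond P {ω | A ω = a} E = pCond P {ω | A ω = a} F := by
  fin_cases a
  · simp only [Fin.zero_eta, pCond_fin_two_zero hA hE, pCond_fin_two_zero hA hF, h]
  · exact h

lemma pCond_fin_two_pos {A : Ω → Fin 2} (hA : Measurable A) {E : Set Ω} (hE : P E ≠ 0)
    (h0 : 0 < pCond P {ω | A ω = 1} E) (h1 : pCond P {ω | A ω = 1} E < 1) (a : Fin 2) :
    0 < pCond P {ω | A ω = a} E := by
  fin_cases a
  · simp only [Fin.zero_eta, pCond_fin_two_zero hA hE, sub_pos, h1]
  · exact h0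

end ConditionalMeans

section Signals

variable {Ω 𝒳 : Type*} [MeasurableSpace Ω] {P : Measure Ω} {X : Ω → 𝒳} {S A : Ω → Fin 2}
  {Y : Ω → ℝ} {a : Fin 2} {x : 𝒳}

lemma psi1a_eqOn_fiber (hc0 : pCond P {ω | S ω = 0} {ω | X ω = x} ≠ 0) :
    EqOn (psi1a P X S A Y a)
      (fun ω => {ω | S ω = 0}.indicator
          (fun _ => mu P X S A Y a x / pCond P {ω | S ω = 0} {ω | X ω = x}) ω +
        {ω | S ω = 1 ∧ A ω = a}.indicator (fun ω => (Y ω - mu P X S A Y a x) /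
          (pCond P {ω | S ω = 1} {ω | X ω = x} *
            pCond P {ω | A ω = a} {ω | X ω = x ∧ S ω = 1})) ω)
      {ω | X ω = x} := by
  intro ω (hω : X ω = x)
  have hS : S ω = 0 ∨ S ω = 1 := by omega
  rcases hS with hS | hS <;> by_cases hA : A ω = a <;>
    simp [psi1a, hω, hS, hA] <;> field_simp

lemma psi0a_eqOn_fiber :
    EqOn (psi0a P X S A Y a)
      ({ω | S ω = 0 ∧ A ω = a}.indicator fun ω => Y ω /
        (pCond P {ω | S ω = 0} {ω | X ω = x} * pCond P {ω | A ω = a} {ω | S ω = 0}))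
      {ω | X ω = x} := by
  intro ω (hω : X ω = x)
  by_cases hS : S ω = 0 <;> by_cases hA : A ω = a <;> simp [psi0a, hω, hS, hA]
  field_simp

lemma integrableOn_psi0a (hXx : MeasurableSet {ω | X ω = x}) (hS : Measurable S)
    (hA : Measurable A) (hY : Integrable Y P) :
    IntegrableOn (psi0a P X S A Y a) {ω | X ω = x} P :=
  ((hY.div_const _).indicator ((hS (measurableSet_singleton 0)).inter
    (hA (measurableSet_singleton a)))).integrableOn.congr_fun psi0a_eqOn_fiber.symm hXx

variable [IsFiniteMeasure P]

lemma integrableOn_psi1a (hXx : MeasurableSet {ω | X ω = x}) (hS : Measurable S)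
    (hA : Measurable A) (hY : Integrable Y P) (hc0 : pCond P {ω | S ω = 0} {ω | X ω = x} ≠ 0) :
    IntegrableOn (psi1a P X S A Y a) {ω | X ω = x} P :=
  IntegrableOn.congr_fun
    (((integrable_const _).indicator (hS (measurableSet_singleton 0))).add
      (((hY.sub (integrable_const _)).div_const _).indicator
        ((hS (measurableSet_singleton 1)).inter (hA (measurableSet_singleton a))))).integrableOn
    (psi1a_eqOn_fiber hc0).symm hXx

lemma setIntegral_psi1a (hXx : MeasurableSet {ω | X ω = x}) (hS : Measurable S)
    (hA : Measurable A) (hY : Integrable Y P) (hc0 : pCond P {ω | S ω = 0} {ω | X ω = x} ≠ 0) :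
    ∫ ω in {ω | X ω = x}, psi1a P X S A Y a ω ∂P =
      mu P X S A Y a x * (P {ω | X ω = x}).toReal := by
  have hS0 : MeasurableSet {ω | S ω = 0} := hS (measurableSet_singleton 0)
  have hS1A : MeasurableSet {ω | S ω = 1 ∧ A ω = a} :=
    (hS (measurableSet_singleton 1)).inter (hA (measurableSet_singleton a))
  have hcell :
      {ω | X ω = x} ∩ {ω | S ω = 1 ∧ A ω = a} = {ω | X ω = x ∧ A ω = a ∧ S ω = 1} := by
    ext ω
    exact and_congr_right' and_comm
  rw [setIntegral_congr_fun hXx (psi1a_eqOn_fiber hc0),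
    integral_add ?_ ?_, setIntegral_indicator hS0, setIntegral_indicator hS1A, hcell,
    integral_div, integral_div, mu, setIntegral_sub_eCond hY.integrableOn, zero_div, add_zero,
    setIntegral_const, smul_eq_mul, measureReal_def, inter_comm, ← pCond_mul_toReal]
  · field_simp
  · exact ((integrable_const _).indicator hS0).restrict
  · exact (((hY.sub (integrable_const _)).div_const _).indicator hS1A).restrict

lemma setIntegral_psi0a (hXx : MeasurableSet {ω | X ω = x}) (hS : Measurable S)
    (hA : Measurable A) (hc0 : pCond P {ω | S ω = 0} {ω | X ω = x} ≠ 0)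
    (hassign : pCond P {ω | A ω = a} {ω | S ω = 0} =
      pCond P {ω | A ω = a} {ω | X ω = x ∧ S ω = 0})
    (hpa : pCond P {ω | A ω = a} {ω | S ω = 0} ≠ 0) :
    ∫ ω in {ω | X ω = x}, psi0a P X S A Y a ω ∂P =
      eCond P {ω | X ω = x ∧ S ω = 0 ∧ A ω = a} Y * (P {ω | X ω = x}).toReal := by
  have hS0A : MeasurableSet {ω | S ω = 0 ∧ A ω = a} :=
    (hS (measurableSet_singleton 0)).inter (hA (measurableSet_singleton a))
  have hcell :
      {ω | A ω = a} ∩ {ω | X ω = x ∧ S ω = 0} = {ω | X ω = x ∧ S ω = 0 ∧ A ω = a} := by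
    ext ω
    exact ⟨fun ⟨ha, hx, hs⟩ => ⟨hx, hs, ha⟩, fun ⟨hx, hs, ha⟩ => ⟨ha, hx, hs⟩⟩
  have hmass : (P {ω | X ω = x ∧ S ω = 0 ∧ A ω = a}).toReal =
      pCond P {ω | A ω = a} {ω | S ω = 0} * pCond P {ω | S ω = 0} {ω | X ω = x} *
        (P {ω | X ω = x}).toReal := by
    rw [mul_assoc, pCond_mul_toReal, inter_comm, hassign, ← hcell, ← pCond_mul_toReal]
    rfl
  have hfiber_cell : {ω | X ω = x} ∩ {ω | S ω = 0 ∧ A ω = a} =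
      {ω | X ω = x ∧ S ω = 0 ∧ A ω = a} := rfl
  rw [setIntegral_congr_fun hXx psi0a_eqOn_fiber, setIntegral_indicator hS0A, hfiber_cell,
    integral_div, setIntegral_eq_eCond_mul, hmass]
  field_simp

end Signals

lemma eCond_rct_cell_eq_mu {Ω 𝒳 : Type*} [MeasurableSpace Ω] {P : Measure Ω} {X : Ω → 𝒳}
    {S A : Ω → Fin 2} {Y Ya : Ω → ℝ} {a : Fin 2} {x : 𝒳}
    (hcell0 : MeasurableSet {ω | X ω = x ∧ S ω = 0 ∧ A ω = a})
    (hcell1 : MeasurableSet {ω | X ω = x ∧ S ω = 1 ∧ A ω = a})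
    (consistencyRCT : ∀ᵐ ω ∂P, S ω = 0 → A ω = a → Y ω = Ya ω)
    (ignorabilityRCT : eCond P {ω | X ω = x ∧ S ω = 0 ∧ A ω = a} Ya =
      eCond P {ω | X ω = x ∧ S ω = 0} Ya)
    (transport : eCond P {ω | X ω = x ∧ S ω = 0} Ya = eCond P {ω | X ω = x ∧ S ω = 1} Ya)
    (consistencyObs : ∀ᵐ ω ∂P, S ω = 1 → A ω = a → Y ω = Ya ω)
    (ignorabilityObs : eCond P {ω | X ω = x ∧ S ω = 1 ∧ A ω = a} Ya =
      eCond P {ω | X ω = x ∧ S ω = 1} Ya) :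
    eCond P {ω | X ω = x ∧ S ω = 0 ∧ A ω = a} Y = mu P X S A Y a x := by
  have hmu_cell : {ω | X ω = x ∧ A ω = a ∧ S ω = 1} = {ω | X ω = x ∧ S ω = 1 ∧ A ω = a} := by
    ext ω
    exact and_congr_right' and_comm
  calc eCond P {ω | X ω = x ∧ S ω = 0 ∧ A ω = a} Y
      = eCond P {ω | X ω = x ∧ S ω = 0 ∧ A ω = a} Ya :=
        eCond_congr_ae hcell0 (consistencyRCT.mono fun ω h hω => h hω.2.1 hω.2.2)
    _ = eCond P {ω | X ω = x ∧ S ω = 1 ∧ A ω = a} Ya := by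
        rw [ignorabilityRCT, transport, ignorabilityObs]
    _ = mu P X S A Y a x := by
        rw [mu, hmu_cell]
        exact eCond_congr_ae hcell1 (consistencyObs.mono fun ω h hω => (h hω.2.1 hω.2.2).symm)

theorem potential_outcome_signal_difference_cmr_general
    {Ω 𝒳 : Type*} [MeasurableSpace Ω] [MeasurableSpace 𝒳]
    [Countable 𝒳] [MeasurableSingletonClass 𝒳]
    (P : Measure Ω) [IsProbabilityMeasure P]
    (X : Ω → 𝒳) (S A : Ω → Fin 2) (Yp : Fin 2 → Ω → ℝ) (Y : Ω → ℝ)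
    (hX : Measurable X) (hS : Measurable S) (hA : Measurable A)
    (hY : Integrable Y P)
    (p : ℝ) (hp0 : 0 < p) (hp1 : p < 1)
    -- internal validity of the RCT:
    (consistencyRCT : ∀ a : Fin 2, ∀ᵐ ω ∂P, S ω = 0 → A ω = a → Y ω = Yp a ω)
    (ignorabilityRCT : ∀ a a' : Fin 2, ∀ x : 𝒳,
      0 < P {ω | X ω = x ∧ S ω = 0 ∧ A ω = a'} →
      eCond P {ω | X ω = x ∧ S ω = 0 ∧ A ω = a'} (Yp a)
        = eCond P {ω | X ω = x ∧ S ω = 0} (Yp a))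
    (fixedAssignment : ∀ x : 𝒳, 0 < P {ω | X ω = x ∧ S ω = 0} →
      pCond P {ω | A ω = 1} {ω | X ω = x ∧ S ω = 0} = p)
    -- internal validity of the observational study:
    (consistencyObs : ∀ a : Fin 2, ∀ᵐ ω ∂P, S ω = 1 → A ω = a → Y ω = Yp a ω)
    (ignorabilityObs : ∀ a a' : Fin 2, ∀ x : 𝒳,
      0 < P {ω | X ω = x ∧ S ω = 1 ∧ A ω = a'} →
      eCond P {ω | X ω = x ∧ S ω = 1 ∧ A ω = a'} (Yp a)
        = eCond P {ω | X ω = x ∧ S ω = 1} (Yp a))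
    (posTreatment : ∀ a : Fin 2, ∀ x : 𝒳, 0 < P {ω | X ω = x ∧ S ω = 1} →
      0 < pCond P {ω | A ω = a} {ω | X ω = x ∧ S ω = 1})
    -- external validity (transportability of potential-outcome means):
    (transport : ∀ a : Fin 2, ∀ x : 𝒳,
      0 < P {ω | X ω = x ∧ S ω = 0} → 0 < P {ω | X ω = x ∧ S ω = 1} →
      eCond P {ω | X ω = x ∧ S ω = 0} (Yp a) = eCond P {ω | X ω = x ∧ S ω = 1} (Yp a))
    -- overlap:
    (overlap : ∀ x : 𝒳, 0 < P {ω | X ω = x} →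
      0 < P {ω | X ω = x ∧ S ω = 0} ∧ 0 < P {ω | X ω = x ∧ S ω = 1}) :
    ∀ a : Fin 2, ∀ x : 𝒳, 0 < P {ω | X ω = x} →
      eCond P {ω | X ω = x} (fun ω => psi1a P X S A Y a ω - psi0a P X S A Y a ω) = 0 := by
  intro a x hx
  obtain ⟨h0, h1⟩ := overlap x hx
  have hfiber : MeasurableSet {ω | X ω = x} := hX (measurableSet_singleton x)
  have hS0 : P {ω | S ω = 0} ≠ 0 := (h0.trans_le (measure_mono fun _ h => h.2)).ne'
  have hc0 : pCond P {ω | S ω = 0} {ω | X ω = x} ≠ 0 :=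
    pCond_ne_zero (h0.trans_le (measure_mono (by rintro ω ⟨hx, hs⟩; exact ⟨hs, hx⟩))).ne'
  have hassign := pCond_fin_two_congr hA hS0 h0.ne'
    ((pCond_eq_of_forall_fiber hX (hA (measurableSet_singleton 1))
      (hS (measurableSet_singleton 0)) hS0 hp0.le fixedAssignment).trans
      (fixedAssignment x h0).symm) a
  have hpa : 0 < pCond P {ω | A ω = a} {ω | X ω = x ∧ S ω = 0} :=
    pCond_fin_two_pos hA h0.ne' (fixedAssignment x h0 ▸ hp0) (fixedAssignment x h0 ▸ hp1) a
  have hcell : ∀ s, 0 < pCond P {ω | A ω = a} {ω | X ω = x ∧ S ω = s} →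
      0 < P {ω | X ω = x ∧ S ω = s ∧ A ω = a} := fun s h =>
    (measure_inter_pos_of_pCond_pos h).trans_le
      (measure_mono (by rintro ω ⟨ha, hx, hs⟩; exact ⟨hx, hs, ha⟩))
  have hmu := eCond_rct_cell_eq_mu
    (hfiber.inter ((hS (measurableSet_singleton 0)).inter (hA (measurableSet_singleton a))))
    (hfiber.inter ((hS (measurableSet_singleton 1)).inter (hA (measurableSet_singleton a))))
    (consistencyRCT a) (ignorabilityRCT a a x (hcell 0 hpa)) (transport a x h0 h1)
    (consistencyObs a) (ignorabilityObs a a x (hcell 1 (posTreatment a x h1)))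
  rw [eCond, integral_sub (integrableOn_psi1a hfiber hS hA hY hc0)
    (integrableOn_psi0a hfiber hS hA hY), setIntegral_psi1a hfiber hS hA hY hc0,
    setIntegral_psi0a hfiber hS hA hc0 hassign (hassign ▸ hpa.ne'), hmu, sub_self, zero_div]

/-- Under internal validity of the RCT, internal validity of the
observational study, external validity (transportability of potential-outcome means), and
overlap, the vector signal difference satisfies the conditional moment restrictions:
for each `a ∈ {0,1}` and every `x` with `P(X=x) > 0`, `E[ψ₁ᵃ − ψ₀ᵃ | X=x] = 0`. -/
theorem potential_outcome_signal_difference_cmr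
    {Ω 𝒳 : Type*} [MeasurableSpace Ω] [MeasurableSpace 𝒳]
    [Countable 𝒳] [MeasurableSingletonClass 𝒳]
    (P : Measure Ω) [IsProbabilityMeasure P]
    (X : Ω → 𝒳) (S A : Ω → Fin 2) (Yp : Fin 2 → Ω → ℝ) (Y : Ω → ℝ)
    (hX : Measurable X) (hS : Measurable S) (hA : Measurable A)
    (hYp : ∀ a, Integrable (Yp a) P) (hY : Integrable Y P)
    (p : ℝ) (hp0 : 0 < p) (hp1 : p < 1)
    -- internal validity of the RCT:
    (consistencyRCT : ∀ a : Fin 2, ∀ᵐ ω ∂P, S ω = 0 → A ω = a → Y ω = Yp a ω)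
    (ignorabilityRCT : ∀ a a' : Fin 2, ∀ x : 𝒳,
      0 < P {ω | X ω = x ∧ S ω = 0 ∧ A ω = a'} →
      eCond P {ω | X ω = x ∧ S ω = 0 ∧ A ω = a'} (Yp a)
        = eCond P {ω | X ω = x ∧ S ω = 0} (Yp a))
    (fixedAssignment : ∀ x : 𝒳, 0 < P {ω | X ω = x ∧ S ω = 0} →
      pCond P {ω | A ω = 1} {ω | X ω = x ∧ S ω = 0} = p)
    -- internal validity of the observational study:
    (consistencyObs : ∀ a : Fin 2, ∀ᵐ ω ∂P, S ω = 1 → A ω = a → Y ω = Yp a ω)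
    (ignorabilityObs : ∀ a a' : Fin 2, ∀ x : 𝒳,
      0 < P {ω | X ω = x ∧ S ω = 1 ∧ A ω = a'} →
      eCond P {ω | X ω = x ∧ S ω = 1 ∧ A ω = a'} (Yp a)
        = eCond P {ω | X ω = x ∧ S ω = 1} (Yp a))
    (posTreatment : ∀ a : Fin 2, ∀ x : 𝒳, 0 < P {ω | X ω = x ∧ S ω = 1} →
      0 < pCond P {ω | A ω = a} {ω | X ω = x ∧ S ω = 1})
    -- external validity (transportability of potential-outcome means):
    (transport : ∀ a : Fin 2, ∀ x : 𝒳,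
      0 < P {ω | X ω = x ∧ S ω = 0} → 0 < P {ω | X ω = x ∧ S ω = 1} →
      eCond P {ω | X ω = x ∧ S ω = 0} (Yp a) = eCond P {ω | X ω = x ∧ S ω = 1} (Yp a))
    (posSelection : ∀ x : 𝒳, 0 < P {ω | X ω = x ∧ S ω = 0} → 0 < P {ω | X ω = x ∧ S ω = 1})
    -- overlap:
    (overlap : ∀ x : 𝒳, 0 < P {ω | X ω = x} →
      0 < P {ω | X ω = x ∧ S ω = 0} ∧ 0 < P {ω | X ω = x ∧ S ω = 1}) :
    ∀ a : Fin 2, ∀ x : 𝒳, 0 < P {ω | X ω = x} →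
      eCond P {ω | X ω = x} (fun ω => psi1a P X S A Y a ω - psi0a P X S A Y a ω) = 0 :=
  potential_outcome_signal_difference_cmr_general P X S A Yp Y hX hS hA hY p hp0 hp1 consistencyRCT
    ignorabilityRCT fixedAssignment consistencyObs ignorabilityObs posTreatment transport overlap
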